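/- arXiv:1412.7364 — 4 statements merged into one kernel-verified Lean document; each statement's English description precedes it below -/
import Mathlib

section
/- Every solution of Ã x̃ = b̃ can be written uniquely as [x*; 0] + [E; -I_k]·a for some a ∈ ℝᵏ, where Ã = [[A, AE],[Eᵀ A, Eᵀ A E]] and b̃ = Ã·[x*; 0]. -/
open Matrix

theorem stmt_4 (n k : ℕ) (A : Matrix (Fin n) (Fin n) ℝ) (E : Matrix (Fin n) (Fin k) ℝ)
    (hA : A.PosDef) (xstar : Fin n → ℝ)
    (Atil : Matrix (Fin n ⊕ Fin k) (Fin n ⊕ Fin k) ℝ)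
    (hAtil : Atil = Matrix.fromBlocks A (A * E) (Eᵀ * A) (Eᵀ * A * E))
    (btil : (Fin n ⊕ Fin k) → ℝ) (hbtil : btil = Atil.mulVec (Sum.elim xstar 0))
    (N : Matrix (Fin n ⊕ Fin k) (Fin k) ℝ)
    (hN : N = Matrix.fromRows E (-(1 : Matrix (Fin k) (Fin k) ℝ)))
    (xtil : (Fin n ⊕ Fin k) → ℝ) (hsol : Atil.mulVec xtil = btil) :
    ∃! a : Fin k → ℝ, xtil = Sum.elim xstar 0 + N.mulVec a := by
  subst hAtil hbtil hN
  set x := xtil ∘ Sum.inl with hx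
  set y := xtil ∘ Sum.inr with hy
  rw [fromBlocks_mulVec, fromBlocks_mulVec] at hsol
  have h1 : A *ᵥ x + (A * E) *ᵥ y = A *ᵥ xstar := by
    have h := congrArg (fun f => f ∘ Sum.inl) hsol
    simpa [Sum.elim_comp_inl, mulVec_zero] using h
  have hAunit : IsUnit A := (isUnit_iff_isUnit_det A).2 (isUnit_iff_ne_zero.2 hA.det_pos.ne')
  have hinj : Function.Injective (A.mulVec) := mulVec_injective_iff_isUnit.2 hAunit
  have h2 : x + E *ᵥ y = xstar := by
    apply hinj
    rw [mulVec_add, ← mulVec_mulVec] at *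
    simpa using h1
  refine ⟨-y, ?_, ?_⟩
  · funext i
    cases i with
    | inl i =>
      have h3 := congrFun h2 i
      simp only [Pi.add_apply, Function.comp_apply, x] at h3
      simp only [mulVec_neg, fromRows_mulVec, Pi.add_apply, Pi.neg_apply, Sum.elim_inl]
      linarith
    | inr i =>
      simp [fromRows_mulVec, mulVec_neg, neg_mulVec, one_mulVec, y]
  · intro b hb
    funext i
    have h := congrFun hb (Sum.inr i)
    simp only [fromRows_mulVec, Pi.add_apply, Sum.elim_inr, neg_mulVec, one_mulVec,
      Pi.neg_apply, Pi.zero_apply, zero_add] at h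
    simp only [Pi.neg_apply, y, Function.comp_apply]
    linarith
end

section
/- Under the same setup, if |F| = k, the solution x̃ of Ã x̃ = b̃ with x̃_F = f is unique. -/
open Matrix

theorem stmt_7 (n k : ℕ) (A : Matrix (Fin n) (Fin n) ℝ) (E : Matrix (Fin n) (Fin k) ℝ)
    (hA : A.PosDef)
    (hKruskal : ∀ S : Finset (Fin n), S.card = k →
      LinearIndependent ℝ (fun i : S => (fun j => Eᵀ j i.1 : Fin k → ℝ)))
    (xstar : Fin n → ℝ)
    (Atil : Matrix (Fin n ⊕ Fin k) (Fin n ⊕ Fin k) ℝ)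
    (hAtil : Atil = Matrix.fromBlocks A (A * E) (Eᵀ * A) (Eᵀ * A * E))
    (btil : (Fin n ⊕ Fin k) → ℝ) (hbtil : btil = Atil.mulVec (Sum.elim xstar 0))
    (F : Finset (Fin n)) (hF : F.card = k) (f : F → ℝ)
    (xtil₁ xtil₂ : (Fin n ⊕ Fin k) → ℝ)
    (h₁ : Atil.mulVec xtil₁ = btil) (h₂ : Atil.mulVec xtil₂ = btil)
    (hf₁ : ∀ i : F, xtil₁ (Sum.inl i.1) = f i)
    (hf₂ : ∀ i : F, xtil₂ (Sum.inl i.1) = f i) :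
    xtil₁ = xtil₂ := by
  set d : (Fin n ⊕ Fin k) → ℝ := xtil₁ - xtil₂ with hd
  have hd0 : Atil.mulVec d = 0 := by
    rw [hd, Matrix.mulVec_sub, h₁, h₂, sub_self]
  set u : Fin n → ℝ := fun i => d (Sum.inl i) with hu
  set v : Fin k → ℝ := fun j => d (Sum.inr j) with hv
  have hde : d = Sum.elim u v := funext fun x => by cases x <;> rfl
  have htop : A.mulVec (u + E.mulVec v) = 0 := by
    rw [hAtil, hde, Matrix.fromBlocks_mulVec] at hd0
    have h1 : A.mulVec (Sum.elim u v ∘ Sum.inl) + (A * E).mulVec (Sum.elim u v ∘ Sum.inr) = 0 :=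
      funext fun i => congrFun hd0 (Sum.inl i)
    have h2 : (Sum.elim u v ∘ Sum.inl) = u := rfl
    have h3 : (Sum.elim u v ∘ Sum.inr) = v := rfl
    rw [h2, h3, ← Matrix.mulVec_mulVec, ← Matrix.mulVec_add] at h1
    exact h1
  have hw : u + E.mulVec v = 0 := by
    by_contra hne
    have := hA.dotProduct_mulVec_pos (x := u + E.mulVec v) hne
    have hz : star (u + E.mulVec v) ⬝ᵥ A.mulVec (u + E.mulVec v) = 0 := by
      rw [htop, dotProduct_zero]
    rw [hz] at this
    simp at this
  -- u vanishes on F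
  have huF : ∀ i ∈ F, u i = 0 := by
    intro i hi
    have := hf₁ ⟨i, hi⟩
    have := hf₂ ⟨i, hi⟩
    simp [hu, hd, *]
  -- rows of E at F dot v = 0
  have hrow : ∀ i ∈ F, (fun j => Eᵀ j i : Fin k → ℝ) ⬝ᵥ v = 0 := by
    intro i hi
    have h1 := congrFun hw i
    simp only [Pi.add_apply, Pi.zero_apply] at h1
    rw [huF i hi, zero_add] at h1
    simpa [Matrix.mulVec, dotProduct, Matrix.transpose_apply] using h1
  -- linear independence + card gives span = top
  have hli := hKruskal F hF
  have hcard : Fintype.card F = Module.finrank ℝ (Fin k → ℝ) := by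
    simp [hF]
  have hspan := hli.span_eq_top_of_card_eq_finrank' hcard
  have hv0 : v = 0 := by
    let φ : (Fin k → ℝ) →ₗ[ℝ] ℝ :=
      { toFun := fun w => w ⬝ᵥ v
        map_add' := fun a b => add_dotProduct a b v
        map_smul' := fun c a => smul_dotProduct c a v }
    have hker : Submodule.span ℝ (Set.range fun i : F => (fun j => Eᵀ j i.1 : Fin k → ℝ))
        ≤ LinearMap.ker φ := by
      rw [Submodule.span_le]
      rintro w ⟨⟨i, hi⟩, rfl⟩
      exact hrow i hi
    have hvv : φ v = 0 := by
      have : v ∈ LinearMap.ker φ := hker (hspan ▸ Submodule.mem_top)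
      exact this
    have : v ⬝ᵥ v = 0 := hvv
    exact (dotProduct_self_eq_zero).mp this
  have hu0 : u = 0 := by
    have := hw
    rw [hv0, Matrix.mulVec_zero, add_zero] at this
    exact this
  funext i
  have hdz : d i = 0 := by
    cases i with
    | inl i => exact congrFun hu0 i
    | inr j => exact congrFun hv0 j
  have := hdz
  rw [hd] at this
  simpa [sub_eq_zero] using this
end

section
/- (Recovery equation.) Let A be symmetric positive definite, E ∈ ℝ^{n×k}, x* ∈ ℝⁿ, Ã = [[A, AE],[Eᵀ A, Eᵀ A E]], b̃ = Ã·[x*; 0]. If x̃ = [y; r] ∈ ℝ^{n+k} satisfies Ã x̃ = b̃, then y + E r = x*. -/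
open Matrix

theorem stmt_10 (n k : ℕ) (A : Matrix (Fin n) (Fin n) ℝ) (E : Matrix (Fin n) (Fin k) ℝ)
    (hA : A.PosDef) (xstar : Fin n → ℝ)
    (Atil : Matrix (Fin n ⊕ Fin k) (Fin n ⊕ Fin k) ℝ)
    (hAtil : Atil = Matrix.fromBlocks A (A * E) (Eᵀ * A) (Eᵀ * A * E))
    (btil : (Fin n ⊕ Fin k) → ℝ) (hbtil : btil = Atil.mulVec (Sum.elim xstar 0))
    (y : Fin n → ℝ) (r : Fin k → ℝ)
    (hsol : Atil.mulVec (Sum.elim y r) = btil) :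
    y + E.mulVec r = xstar := by
  subst hAtil hbtil
  rw [fromBlocks_mulVec, fromBlocks_mulVec] at hsol
  have htop := congrArg (fun v => v ∘ Sum.inl) hsol
  simp only [Sum.elim_comp_inl, Sum.elim_comp_inr, mulVec_zero, add_zero, ← mulVec_mulVec] at htop
  have hAinv : Function.Injective A.mulVec := by
    have hd : IsUnit A.det := isUnit_iff_ne_zero.mpr (ne_of_gt hA.det_pos)
    exact Matrix.mulVec_injective_iff_isUnit.mpr ((Matrix.isUnit_iff_isUnit_det A).mpr hd)
  apply hAinv
  rw [mulVec_add]
  exact htop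
end

section
/- (Eigenvalue interlacing for the encoded matrix.) Let A be n×n symmetric positive definite with eigenvalues 0 < λ₁ ≤ ⋯ ≤ λ_n, and let Ã = [[A, AE],[Eᵀ A, Eᵀ A E]] have eigenvalues λ̃₁ ≤ ⋯ ≤ λ̃_{n+k}. Then λ̃₁ = ⋯ = λ̃_k = 0, λ̃_{k+1} > 0, λ₁ ≤ λ̃_{k+1}, and λ_n ≤ λ̃_{n+k}. -/
open Matrix

lemma aux_psd_dot {m : Type*} [Fintype m] {M : Matrix m m ℝ} (hM : M.PosSemidef) (x : m → ℝ) :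
    0 ≤ x ⬝ᵥ M *ᵥ x := by simpa using hM.dotProduct_mulVec_nonneg x

lemma aux_dot_pos {m : Type*} [Fintype m] {x : m → ℝ} (hx : x ≠ 0) : 0 < x ⬝ᵥ x := by
  simpa using Matrix.dotProduct_self_star_pos_iff.mpr hx

lemma aux_sub_psd {m : Type*} [Fintype m] [DecidableEq m] {B : Matrix m m ℝ}
    (hB : B.IsHermitian) {c : ℝ} (h : ∀ i, c ≤ hB.eigenvalues i) :
    (B - c • 1).PosSemidef := by
  have hU : (hB.eigenvectorUnitary : Matrix m m ℝ) * star (hB.eigenvectorUnitary : Matrix m m ℝ) = 1 :=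
    (Matrix.mem_unitaryGroup_iff).mp (hB.eigenvectorUnitary).2
  have hdiag : (diagonal (fun i => hB.eigenvalues i - c) : Matrix m m ℝ)
      = diagonal (fun i => hB.eigenvalues i) - c • 1 := by
    ext i j
    by_cases hij : i = j <;> simp [diagonal_apply, hij, Matrix.one_apply, Matrix.smul_apply]
  have key : B - c • 1 = (hB.eigenvectorUnitary : Matrix m m ℝ) *
      diagonal (fun i => hB.eigenvalues i - c) * star (hB.eigenvectorUnitary : Matrix m m ℝ) := by
    rw [hdiag, Matrix.mul_sub, Matrix.sub_mul]
    have h1 : (hB.eigenvectorUnitary : Matrix m m ℝ) * (c • (1 : Matrix m m ℝ)) *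
        star (hB.eigenvectorUnitary : Matrix m m ℝ) = c • 1 := by
      rw [mul_smul_comm, Matrix.mul_one, Matrix.smul_mul, hU]
    rw [h1]
    have := hB.spectral_theorem
    simpa [Matrix.mul_assoc] using this
  rw [key, Matrix.star_eq_conjTranspose]
  exact (Matrix.posSemidef_diagonal_iff.mpr fun i => sub_nonneg.mpr (h i)).mul_mul_conjTranspose_same _

lemma aux_sup_psd {m : Type*} [Fintype m] [DecidableEq m] {B : Matrix m m ℝ}
    (hB : B.IsHermitian) {c : ℝ} (h : ∀ i, hB.eigenvalues i ≤ c) :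
    (c • 1 - B).PosSemidef := by
  have hU : (hB.eigenvectorUnitary : Matrix m m ℝ) * star (hB.eigenvectorUnitary : Matrix m m ℝ) = 1 :=
    (Matrix.mem_unitaryGroup_iff).mp (hB.eigenvectorUnitary).2
  have hdiag : (diagonal (fun i => c - hB.eigenvalues i) : Matrix m m ℝ)
      = c • 1 - diagonal (fun i => hB.eigenvalues i) := by
    ext i j
    by_cases hij : i = j <;> simp [diagonal_apply, hij, Matrix.one_apply, Matrix.smul_apply]
  have key : c • 1 - B = (hB.eigenvectorUnitary : Matrix m m ℝ) *
      diagonal (fun i => c - hB.eigenvalues i) * star (hB.eigenvectorUnitary : Matrix m m ℝ) := by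
    rw [hdiag, Matrix.mul_sub, Matrix.sub_mul]
    have h1 : (hB.eigenvectorUnitary : Matrix m m ℝ) * (c • (1 : Matrix m m ℝ)) *
        star (hB.eigenvectorUnitary : Matrix m m ℝ) = c • 1 := by
      rw [mul_smul_comm, Matrix.mul_one, Matrix.smul_mul, hU]
    rw [h1]
    have := hB.spectral_theorem
    simpa [Matrix.mul_assoc] using this
  rw [key, Matrix.star_eq_conjTranspose]
  exact (Matrix.posSemidef_diagonal_iff.mpr fun i => sub_nonneg.mpr (h i)).mul_mul_conjTranspose_same _

lemma aux_eig_ge {m : Type*} [Fintype m] [DecidableEq m] {B : Matrix m m ℝ} {c μ : ℝ} {w : m → ℝ}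
    (hpsd : (B - c • (1 : Matrix m m ℝ)).PosSemidef) (hw : B *ᵥ w = μ • w) (hw0 : w ≠ 0) :
    c ≤ μ := by
  have h1 := aux_psd_dot hpsd w
  have h2 := aux_dot_pos hw0
  rw [sub_mulVec, hw, smul_mulVec, one_mulVec, dotProduct_sub, dotProduct_smul,
    dotProduct_smul, smul_eq_mul, smul_eq_mul] at h1
  nlinarith

open scoped MatrixOrder in
set_option maxHeartbeats 2000000 in
theorem stmt_11 (n k : ℕ) (hn : 0 < n)
    (A : Matrix (Fin n) (Fin n) ℝ) (E : Matrix (Fin n) (Fin k) ℝ)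
    (hA : A.PosDef)
    (Atil : Matrix (Fin n ⊕ Fin k) (Fin n ⊕ Fin k) ℝ)
    (hAtil : Atil = Matrix.fromBlocks A (A * E) (Eᵀ * A) (Eᵀ * A * E))
    (hH : Atil.IsHermitian)
    (lam : Fin n → ℝ) (hlam_mono : Monotone lam)
    (hlam : ∃ e : Fin n ≃ Fin n, lam = hA.isHermitian.eigenvalues ∘ e)
    (lamt : Fin (n + k) → ℝ) (hlamt_mono : Monotone lamt)
    (hlamt : ∃ e : Fin (n + k) ≃ (Fin n ⊕ Fin k), lamt = hH.eigenvalues ∘ e) :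
    (∀ i : Fin (n + k), (i : ℕ) < k → lamt i = 0) ∧
    0 < lamt ⟨k, by omega⟩ ∧
    lam ⟨0, hn⟩ ≤ lamt ⟨k, by omega⟩ ∧
    lam ⟨n - 1, by omega⟩ ≤ lamt ⟨n + k - 1, by omega⟩ := by
  classical
  obtain ⟨e, he⟩ := hlamt
  obtain ⟨f, hf⟩ := hlam
  set S := CFC.sqrt A with hSdef
  have hSH : S.IsHermitian := (Matrix.nonneg_iff_posSemidef.mp (CFC.sqrt_nonneg A)).1
  have hSS : S * S = A := CFC.sqrt_mul_sqrt_self A hA.posSemidef.nonneg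
  set C : Matrix (Fin n) (Fin n ⊕ Fin k) ℝ := fromCols 1 E with hCdef
  set X : Matrix (Fin n) (Fin n ⊕ Fin k) ℝ := S * C with hXdef
  have hXH : Xᴴ = Cᵀ * S := by
    rw [hXdef, conjTranspose_mul, hSH.eq]; rfl
  have hCtAC : Cᵀ * (A * C) = Matrix.fromBlocks A (A * E) (Eᵀ * A) (Eᵀ * A * E) := by
    rw [hCdef, transpose_fromCols, transpose_one, mul_fromCols, fromRows_mul,
      mul_fromCols, mul_fromCols, Matrix.mul_one, Matrix.one_mul, Matrix.one_mul,
      fromRows_fromCols_eq_fromBlocks, Matrix.mul_assoc]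
  have hAtilX : Atil = Xᴴ * X := by
    rw [hAtil, hXH, hXdef, Matrix.mul_assoc Cᵀ S (S * C), ← Matrix.mul_assoc S S C, hSS, hCtAC]
  have hEEt : (E * Eᵀ).PosSemidef := posSemidef_self_mul_conjTranspose E
  have hR : (1 + E * Eᵀ : Matrix (Fin n) (Fin n) ℝ).PosDef := by
    refine .of_dotProduct_mulVec_pos (Matrix.isHermitian_one.add hEEt.1) fun x hx => ?_
    have h1 := hEEt.dotProduct_mulVec_nonneg x
    have h2 : (0:ℝ) < x ⬝ᵥ x := by simpa using Matrix.dotProduct_self_star_pos_iff.mpr hx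
    simp only [star_trivial, add_mulVec, one_mulVec, dotProduct_add] at *
    linarith
  have hCC : C * Cᵀ = 1 + E * Eᵀ := by
    rw [hCdef, transpose_fromCols, transpose_one, fromCols_mul_fromRows, Matrix.one_mul]
  have hXXH : X * Xᴴ = S * (1 + E * Eᵀ) * S := by
    rw [hXH, hXdef, Matrix.mul_assoc S C (Cᵀ * S), ← Matrix.mul_assoc C Cᵀ S, hCC,
      ← Matrix.mul_assoc]
  have hdetS : S.det ≠ 0 := by
    intro h
    have : S.det * S.det = A.det := by rw [← det_mul, hSS]
    rw [h, mul_zero] at this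
    exact hA.det_pos.ne' this.symm
  have hUnit : IsUnit (X * Xᴴ) := by
    rw [hXXH]
    exact (((Matrix.isUnit_iff_isUnit_det S).mpr hdetS.isUnit).mul hR.isUnit).mul
      ((Matrix.isUnit_iff_isUnit_det S).mpr hdetS.isUnit)
  have hPSD : Atil.PosSemidef := by
    rw [hAtilX]; exact posSemidef_conjTranspose_mul_self X
  have hrank : Atil.rank = n := by
    rw [hAtilX, rank_conjTranspose_mul_self, ← rank_self_mul_conjTranspose X,
      Matrix.rank_of_isUnit _ hUnit, Fintype.card_fin]
  -- nonneg eigenvalues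
  have hnn : ∀ i, 0 ≤ lamt i := by
    intro i
    rw [he]
    exact hPSD.eigenvalues_nonneg (e i)
  -- counting
  have hcard : Fintype.card {i : Fin n ⊕ Fin k // hH.eigenvalues i ≠ 0} = n :=
    hH.rank_eq_card_non_zero_eigs.symm.trans hrank
  have hcard2 : (Finset.univ.filter (fun i : Fin (n+k) => lamt i ≠ 0)).card = n := by
    have hcongr : Fintype.card {i : Fin (n+k) // lamt i ≠ 0}
        = Fintype.card {i : Fin n ⊕ Fin k // hH.eigenvalues i ≠ 0} :=
      Fintype.card_congr (e.subtypeEquiv (fun i => by rw [he]; exact Iff.rfl))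
    rw [← Fintype.card_subtype, hcongr, hcard]
  have part1 : ∀ i : Fin (n + k), (i : ℕ) < k → lamt i = 0 := by
    intro i hi
    by_contra hne
    have hsub : Finset.Ici i ⊆ Finset.univ.filter (fun j => lamt j ≠ 0) := by
      intro j hj
      simp only [Finset.mem_filter, Finset.mem_univ, true_and]
      exact ne_of_gt (lt_of_lt_of_le (lt_of_le_of_ne (hnn i) (Ne.symm hne))
        (hlamt_mono (Finset.mem_Ici.mp hj)))
    have hle := Finset.card_le_card hsub
    rw [Fin.card_Ici, hcard2] at hle
    have := i.isLt
    omega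
  have hk0 : lamt ⟨k, by omega⟩ ≠ 0 := by
    intro h0
    have hsub : Finset.Iic (⟨k, by omega⟩ : Fin (n+k)) ⊆
        Finset.univ.filter (fun j : Fin (n+k) => ¬ lamt j ≠ 0) := by
      intro j hj
      simp only [Finset.mem_filter, Finset.mem_univ, true_and, not_not]
      exact le_antisymm (h0 ▸ hlamt_mono (Finset.mem_Iic.mp hj)) (hnn j)
    have hle := Finset.card_le_card hsub
    rw [Fin.card_Iic] at hle
    have hle' : k + 1 ≤ (Finset.univ.filter (fun j : Fin (n+k) => ¬ lamt j ≠ 0)).card := hle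
    clear hle
    have hsum := Finset.card_filter_add_card_filter_not
      (s := (Finset.univ : Finset (Fin (n+k)))) (p := fun j => lamt j ≠ 0)
    rw [hcard2, Finset.card_univ, Fintype.card_fin] at hsum
    omega
  have part2 : 0 < lamt ⟨k, by omega⟩ := lt_of_le_of_ne (hnn _) (Ne.symm hk0)
  -- part 3
  obtain ⟨v, hv0, hv⟩ : ∃ v : (Fin n ⊕ Fin k) → ℝ, v ≠ 0 ∧
      Atil *ᵥ v = hH.eigenvalues (e ⟨k, by omega⟩) • v := by
    refine ⟨⇑(hH.eigenvectorBasis (e ⟨k, by omega⟩)), ?_, hH.mulVec_eigenvectorBasis _⟩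
    intro h
    exact hH.eigenvectorBasis.orthonormal.ne_zero _ (by ext i; exact congrFun h i)
  have hmu : lamt ⟨k, by omega⟩ = hH.eigenvalues (e ⟨k, by omega⟩) := congrFun he _
  set w := X *ᵥ v with hw_def
  have hw : (X * Xᴴ) *ᵥ w = hH.eigenvalues (e ⟨k, by omega⟩) • w := by
    rw [hw_def, mulVec_mulVec, Matrix.mul_assoc, ← mulVec_mulVec, ← hAtilX, hv, mulVec_smul]
  have hw0 : w ≠ 0 := by
    intro h
    have h1 : Atil *ᵥ v = 0 := by
      rw [hAtilX, ← mulVec_mulVec, ← hw_def, h, mulVec_zero]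
    rw [hv] at h1
    rcases smul_eq_zero.mp h1 with h2 | h2
    · rw [hmu] at part2; rw [h2] at part2; exact lt_irrefl _ part2
    · exact hv0 h2
  have hc : ∀ i, lam ⟨0, hn⟩ ≤ hA.isHermitian.eigenvalues i := by
    intro i
    have h1 : hA.isHermitian.eigenvalues i = lam (f.symm i) := by rw [hf]; simp
    rw [h1]
    exact hlam_mono (by simp [Fin.le_def])
  have hApsd : (A - lam ⟨0, hn⟩ • 1).PosSemidef := aux_sub_psd hA.isHermitian hc
  have hSE : ((S * E) * (S * E)ᴴ).PosSemidef := posSemidef_self_mul_conjTranspose _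
  have hMsub : (X * Xᴴ - lam ⟨0, hn⟩ • 1).PosSemidef := by
    have hSE2 : (S * E) * (S * E)ᴴ = S * (E * Eᵀ) * S := by
      rw [conjTranspose_mul, hSH.eq, show Eᴴ = Eᵀ from rfl, Matrix.mul_assoc,
        ← Matrix.mul_assoc E Eᵀ S, ← Matrix.mul_assoc]
    have heq : X * Xᴴ - lam ⟨0, hn⟩ • 1 = (S * E) * (S * E)ᴴ + (A - lam ⟨0, hn⟩ • 1) := by
      rw [hXXH, hSE2, Matrix.mul_add, Matrix.add_mul, Matrix.mul_one, hSS]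
      abel
    rw [heq]
    exact hSE.add hApsd
  have part3 : lam ⟨0, hn⟩ ≤ lamt ⟨k, by omega⟩ := by
    rw [hmu]
    exact aux_eig_ge hMsub hw hw0
  -- part 4
  have hc' : ∀ j, hH.eigenvalues j ≤ lamt ⟨n + k - 1, by omega⟩ := by
    intro j
    have h1 : hH.eigenvalues j = lamt (e.symm j) := by rw [he]; simp
    rw [h1]
    refine hlamt_mono ?_
    have := (e.symm j).isLt
    simp only [Fin.le_def]
    omega
  have htop : ((lamt ⟨n + k - 1, by omega⟩) • 1 - Atil).PosSemidef := aux_sup_psd hH hc'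
  obtain ⟨u, hu0, hu⟩ : ∃ u : Fin n → ℝ, u ≠ 0 ∧
      A *ᵥ u = lam ⟨n - 1, by omega⟩ • u := by
    refine ⟨⇑(hA.isHermitian.eigenvectorBasis (f ⟨n - 1, by omega⟩)), ?_, ?_⟩
    · intro h
      exact hA.isHermitian.eigenvectorBasis.orthonormal.ne_zero _ (by ext i; exact congrFun h i)
    · have h1 : lam ⟨n - 1, by omega⟩ = hA.isHermitian.eigenvalues (f ⟨n - 1, by omega⟩) :=
        congrFun hf _
      rw [h1]
      exact hA.isHermitian.mulVec_eigenvectorBasis _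
  have hmv : Atil *ᵥ Sum.elim u 0 = Sum.elim (A *ᵥ u) ((Eᵀ * A) *ᵥ u) := by
    rw [hAtil, fromBlocks_mulVec]
    simp [Sum.elim_comp_inl, Sum.elim_comp_inr]
  have hz : Sum.elim u 0 ⬝ᵥ Atil *ᵥ Sum.elim u 0 = lam ⟨n - 1, by omega⟩ * (u ⬝ᵥ u) := by
    rw [hmv, sumElim_dotProduct_sumElim, hu, dotProduct_smul, smul_eq_mul,
      zero_dotProduct, add_zero]
  have hzz : Sum.elim u (0 : Fin k → ℝ) ⬝ᵥ Sum.elim u 0 = u ⬝ᵥ u := by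
    rw [sumElim_dotProduct_sumElim, zero_dotProduct, add_zero]
  have h6 := aux_psd_dot htop (Sum.elim u 0)
  rw [sub_mulVec, dotProduct_sub, hz, smul_mulVec, one_mulVec, dotProduct_smul, hzz,
    smul_eq_mul] at h6
  have h7 : (0:ℝ) < u ⬝ᵥ u := by simpa using Matrix.dotProduct_self_star_pos_iff.mpr hu0
  have part4 : lam ⟨n - 1, by omega⟩ ≤ lamt ⟨n + k - 1, by omega⟩ := by nlinarith
  exact ⟨part1, part2, part3, part4⟩
end
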